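/- arXiv:2109.01172 — 7 statements merged into one kernel-verified Lean document; each statement's English description precedes it below -/
import Mathlib

section
/- Fix a positive integer N and reals k > 0, α > 0, r > 0. Call a pair (x, (M_i)_{i≥0}) of nonnegative reals with Σ_{i≥0} (i+1) M_i < ∞ an equilibrium of the silicosis system if it satisfies 0 = r − k x M_0 − M_0, 0 = k x M_{i−1} − k x M_i − M_i for all i ≥ 1, and 0 = α − k x Σ_{i≥0} M_i + Σ_{i≥N+1} i M_i (all series converging). Then there exists a unique μ* > 0 such that for all α, r > 0: the system has no equilibria if α/r > μ*, exactly one equilibrium if α/r = μ*, and exactly two equilibria if 0 < α/r < μ*. -/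
/-- A pair `(x, M)` of nonnegative reals with `Σ (i+1) M_i < ∞` is an equilibrium of the
silicosis system with piecewise constant coefficients if it satisfies
`0 = r - kxM₀ - M₀`, `0 = kxM_{i-1} - kxM_i - M_i` for `i ≥ 1`, and
`0 = α - kx Σ_{i≥0} M_i + Σ_{i≥N+1} i M_i`. -/
def IsEquilibrium (N : ℕ) (k α r : ℝ) (x : ℝ) (M : ℕ → ℝ) : Prop :=
  0 ≤ x ∧ (∀ i, 0 ≤ M i) ∧ Summable (fun i : ℕ => ((i : ℝ) + 1) * M i) ∧
  r - k * x * M 0 - M 0 = 0 ∧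
  (∀ i : ℕ, 1 ≤ i → k * x * M (i - 1) - k * x * M i - M i = 0) ∧
  α - k * x * (∑' i : ℕ, M i) + (∑' i : ℕ, if N + 1 ≤ i then (i : ℝ) * M i else 0) = 0

/-!
Put `θ = kx / (1 + kx) ∈ [0, 1)`. The first two equilibrium equations force `M_i = r (1 - θ) θ^i`,
and since then `kx Σ M_i = Σ i M_i`, the third one reduces to `α / r = μ(θ)` with
`μ(θ) = (1 - θ) Σ_{i ≤ N} i θ^i = Σ_{1 ≤ i ≤ N} θ^i - N θ^(N + 1)`, which vanishes at `0` and `1`.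
Its derivative is `θ^N G(θ)` with `G(θ) = Σ_{i < N} (i + 1) θ^(i - N) - N (N + 1)` strictly
decreasing, so `μ` increases on `[0, θ₀]` and decreases on `[θ₀, 1]` for the zero `θ₀` of `G`.
Hence `μ* = μ(θ₀)`, and `μ(θ) = α / r` has no, one or two solutions in `[0, 1)`.
-/

open Set
open Finset (range mem_range mul_sum sum_congr)

theorem Summable.tsum_ite_le {G : Type*} [AddCommGroup G] [TopologicalSpace G]
    [IsTopologicalAddGroup G] [T2Space G] {g : ℕ → G} (hg : Summable g) (m : ℕ) :
    ∑' i, (if m ≤ i then g i else 0) = ∑' i, g i - ∑ i ∈ range m, g i := by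
  have hhead : ∀ i ∉ range m, (if i < m then g i else 0) = 0 := fun i hi => by simp_all
  have hsplit : (fun i => if m ≤ i then g i else 0) = fun i => g i - if i < m then g i else 0 := by
    funext i; split_ifs <;> first | omega | simp
  rw [hsplit, hg.tsum_sub (summable_of_ne_finset_zero hhead), tsum_eq_sum hhead]
  exact congrArg _ (sum_congr rfl fun i hi => if_pos (mem_range.mp hi))

section Unimodal

variable {f : ℝ → ℝ} {a b c x y : ℝ}

theorem lt_of_strictMonoOn_of_strictAntiOn (hmono : StrictMonoOn f (Icc a c))
    (hanti : StrictAntiOn f (Icc c b)) (hc : c ∈ Icc a b) (hx : x ∈ Icc a b) (hxc : x ≠ c) :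
    f x < f c := by
  rcases hxc.lt_or_gt with h | h
  · exact hmono ⟨hx.1, h.le⟩ ⟨hc.1, le_rfl⟩ h
  · exact hanti ⟨le_rfl, hc.2⟩ ⟨h.le, hx.2⟩ h

theorem exists_pair_of_strictMonoOn_of_strictAntiOn (hf : ContinuousOn f (Icc a b))
    (hmono : StrictMonoOn f (Icc a c)) (hanti : StrictAntiOn f (Icc c b)) (hc : c ∈ Icc a b)
    (ha : f a < y) (hb : f b < y) (hy : y < f c) :
    ∃ x₁ ∈ Ioo a c, ∃ x₂ ∈ Ioo c b, f x₁ = y ∧ f x₂ = y ∧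
      ∀ x ∈ Icc a b, f x = y → x = x₁ ∨ x = x₂ := by
  obtain ⟨x₁, hx₁, hfx₁⟩ :=
    intermediate_value_Ioo hc.1 (hf.mono (Icc_subset_Icc_right hc.2)) ⟨ha, hy⟩
  obtain ⟨x₂, hx₂, hfx₂⟩ :=
    intermediate_value_Ioo' hc.2 (hf.mono (Icc_subset_Icc_left hc.1)) ⟨hb, hy⟩
  refine ⟨x₁, hx₁, x₂, hx₂, hfx₁, hfx₂, fun x hx hfx => ?_⟩
  rcases lt_trichotomy x c with h | rfl | h
  · exact .inl (hmono.injOn ⟨hx.1, h.le⟩ (Ioo_subset_Icc_self hx₁) (hfx.trans hfx₁.symm))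
  · exact absurd hfx hy.ne'
  · exact .inr (hanti.injOn ⟨h.le, hx.2⟩ (Ioo_subset_Icc_self hx₂) (hfx.trans hfx₂.symm))

end Unimodal

namespace Silicosis

noncomputable def mu (N : ℕ) (θ : ℝ) : ℝ :=
  (1 - θ) * ∑ i ∈ range (N + 1), (i : ℝ) * θ ^ i

noncomputable def equilibriumOf (k r θ : ℝ) : ℝ × (ℕ → ℝ) :=
  (θ / (k * (1 - θ)), fun i => r * (1 - θ) * θ ^ i)

section Equilibria

variable {N : ℕ} {k α r θ : ℝ}

theorem equilibriumOf_injective (hr : r ≠ 0) : Function.Injective (equilibriumOf k r) := by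
  intro θ₁ θ₂ h
  have h₀ := congrFun (congrArg Prod.snd h) 0
  simp only [equilibriumOf, pow_zero, mul_one, mul_right_inj' hr] at h₀
  linarith

theorem mul_equilibriumOf_fst (hk : k ≠ 0) (hθ : θ ≠ 1) :
    k * (equilibriumOf k r θ).1 = θ / (1 - θ) := by
  have : 1 - θ ≠ 0 := sub_ne_zero.2 hθ.symm
  simp only [equilibriumOf]
  field_simp

theorem mul_tsum_sub_tsum_tail_equilibriumOf (hk : k ≠ 0) (hθ : θ ∈ Ico 0 1) :
    k * (equilibriumOf k r θ).1 * ∑' i, (equilibriumOf k r θ).2 i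
      - ∑' i, (if N + 1 ≤ i then (i : ℝ) * (equilibriumOf k r θ).2 i else 0) = r * mu N θ := by
  have hθ1 : 1 - θ ≠ 0 := by linarith [hθ.2]
  have hnorm : ‖θ‖ < 1 := by rw [Real.norm_of_nonneg hθ.1]; exact hθ.2
  have hmass : ∑' i, (equilibriumOf k r θ).2 i = r := by
    simp only [equilibriumOf]
    rw [tsum_mul_left, tsum_geometric_of_norm_lt_one hnorm]
    field_simp
  have hmoment : ∀ i : ℕ, (i : ℝ) * (equilibriumOf k r θ).2 i = r * (1 - θ) * (i * θ ^ i) :=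
    fun i => by simp only [equilibriumOf]; ring
  have hsummable : Summable fun i : ℕ => (i : ℝ) * (equilibriumOf k r θ).2 i := by
    simp only [hmoment]
    refine Summable.mul_left _ ?_
    simpa using summable_pow_mul_geometric_of_norm_lt_one 1 hnorm
  rw [hsummable.tsum_ite_le, hmass, mul_equilibriumOf_fst hk (by linarith [hθ.2])]
  simp only [hmoment, tsum_mul_left, tsum_coe_mul_geometric_of_norm_lt_one hnorm, mu, mul_sum]
  field_simp
  ring

theorem isEquilibrium_equilibriumOf_iff (hk : 0 < k) (hr : 0 ≤ r) (hθ : θ ∈ Ico 0 1) :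
    IsEquilibrium N k α r (equilibriumOf k r θ).1 (equilibriumOf k r θ).2 ↔ r * mu N θ = α := by
  have htail := mul_tsum_sub_tsum_tail_equilibriumOf (N := N) (r := r) hk.ne' hθ
  refine ⟨fun h => by linarith [h.2.2.2.2.2], fun h => ?_⟩
  have hθ1 : 0 < 1 - θ := by linarith [hθ.2]
  have hkx := mul_equilibriumOf_fst (r := r) hk.ne' (by linarith [hθ.2] : θ ≠ 1)
  refine ⟨div_nonneg hθ.1 (by positivity), fun i => ?_, ?_, ?_, fun i hi => ?_, by linarith⟩
  · have := hθ.1; simp only [equilibriumOf]; positivity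
  · have hnorm : ‖θ‖ < 1 := by rw [Real.norm_of_nonneg hθ.1]; exact hθ.2
    refine (((summable_pow_mul_geometric_of_norm_lt_one 1 hnorm).add
      (summable_geometric_of_norm_lt_one hnorm)).mul_left (r * (1 - θ))).congr fun i => ?_
    simp only [equilibriumOf]; ring
  · rw [hkx]; simp only [equilibriumOf]; field_simp; ring
  · obtain ⟨j, rfl⟩ := Nat.exists_eq_add_of_le' hi
    rw [hkx]; simp only [equilibriumOf, Nat.add_sub_cancel]; field_simp; ring

theorem exists_eq_equilibriumOf {x : ℝ} {M : ℕ → ℝ} (hk : 0 < k)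
    (h : IsEquilibrium N k α r x M) : ∃ θ ∈ Ico (0 : ℝ) 1, (x, M) = equilibriumOf k r θ := by
  obtain ⟨hx, -, -, hM₀, hMsucc, -⟩ := h
  have hkx : 0 ≤ k * x := mul_nonneg hk.le hx
  have hkx1 : 0 < 1 + k * x := by linarith
  refine ⟨k * x / (1 + k * x), ⟨by positivity, (div_lt_one hkx1).2 (by linarith)⟩, ?_⟩
  have hθ1 : 1 - k * x / (1 + k * x) = 1 / (1 + k * x) := by field_simp; ring
  have hM : ∀ i, M i = r * (1 / (1 + k * x)) * (k * x / (1 + k * x)) ^ i := by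
    intro i
    induction i with
    | zero => field_simp; linarith
    | succ j ih =>
      have := hMsucc (j + 1) (by omega)
      rw [Nat.add_sub_cancel, ih] at this
      rw [pow_succ]
      field_simp at this ⊢
      linarith
  simp only [equilibriumOf, hθ1, Prod.mk.injEq]
  exact ⟨by field_simp, funext hM⟩

theorem isEquilibrium_iff (hk : 0 < k) (hr : 0 < r) {s : ℝ × (ℕ → ℝ)} :
    IsEquilibrium N k α r s.1 s.2 ↔
      ∃ θ ∈ Ico (0 : ℝ) 1, mu N θ = α / r ∧ s = equilibriumOf k r θ := by
  constructor
  · intro h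
    obtain ⟨θ, hθ, hs⟩ := exists_eq_equilibriumOf hk h
    rw [Prod.mk.eta] at hs
    refine ⟨θ, hθ, ?_, hs⟩
    rw [hs, isEquilibrium_equilibriumOf_iff hk hr.le hθ] at h
    rw [← h, mul_div_cancel_left₀ _ hr.ne']
  · rintro ⟨θ, hθ, hmu, rfl⟩
    rw [isEquilibrium_equilibriumOf_iff hk hr.le hθ, hmu, mul_div_cancel₀ _ hr.ne']

end Equilibria

section Profile

variable {N : ℕ} {θ θ₀ : ℝ}

theorem mu_eq_sum_sub (N : ℕ) (θ : ℝ) :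
    mu N θ = ∑ i ∈ range N, θ ^ (i + 1) - N * θ ^ (N + 1) := by
  induction N with
  | zero => simp [mu]
  | succ n ih =>
    rw [mu, Finset.sum_range_succ, mul_add, ← mu, ih, Finset.sum_range_succ]
    push_cast
    ring

theorem continuous_mu (N : ℕ) : Continuous (mu N) := by
  unfold mu; fun_prop

@[simp] theorem mu_zero (N : ℕ) : mu N 0 = 0 := by simp [mu_eq_sum_sub]

@[simp] theorem mu_one (N : ℕ) : mu N 1 = 0 := by simp [mu]

noncomputable def muDerivRatio (N : ℕ) (θ : ℝ) : ℝ :=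
  ∑ i ∈ range N, ((i : ℝ) + 1) / θ ^ (N - i) - N * (N + 1)

theorem hasDerivAt_mu (hθ : 0 < θ) : HasDerivAt (mu N) (θ ^ N * muDerivRatio N θ) θ := by
  have hpoly : HasDerivAt (fun θ : ℝ => ∑ i ∈ range N, θ ^ (i + 1) - N * θ ^ (N + 1))
      (∑ i ∈ range N, ((i : ℝ) + 1) * θ ^ i - N * ((N + 1) * θ ^ N)) θ := by
    refine (HasDerivAt.fun_sum fun i _ => ?_).sub ?_
    · simpa using hasDerivAt_pow (i + 1) θ
    · simpa using (hasDerivAt_pow (N + 1) θ).const_mul (N : ℝ)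
  convert hpoly using 1
  · exact funext (mu_eq_sum_sub N)
  · rw [muDerivRatio, mul_sub, Finset.mul_sum]
    congr 1
    · refine sum_congr rfl fun i hi => ?_
      rw [← Nat.sub_add_cancel (mem_range.mp hi).le, pow_add, Nat.add_sub_cancel]
      field_simp
    · ring

theorem strictAntiOn_muDerivRatio (hN : 0 < N) : StrictAntiOn (muDerivRatio N) (Ioi 0) := by
  intro a ha b _ hab
  refine sub_lt_sub_right (Finset.sum_lt_sum_of_nonempty (Finset.nonempty_range_iff.2 hN.ne')
    fun i hi => ?_) _
  have hiN := mem_range.mp hi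
  exact div_lt_div_of_pos_left (by positivity) (pow_pos ha _)
    (pow_lt_pow_left₀ hab (le_of_lt ha) (by omega))

theorem continuousOn_muDerivRatio (N : ℕ) : ContinuousOn (muDerivRatio N) (Ioi 0) := by
  unfold muDerivRatio
  exact (continuousOn_finsetSum _ fun i _ => continuousOn_const.div (continuous_pow _).continuousOn
    fun x hx => pow_ne_zero _ (ne_of_gt hx)).sub continuousOn_const

theorem muDerivRatio_one_neg (hN : 0 < N) : muDerivRatio N 1 < 0 := by
  have hle : ∑ i ∈ range N, ((i : ℝ) + 1) / 1 ^ (N - i) ≤ ∑ _i ∈ range N, (N : ℝ) :=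
    Finset.sum_le_sum fun i hi => by
      rw [one_pow, div_one]; exact_mod_cast mem_range.mp hi
  have hN' : (0 : ℝ) < N := by exact_mod_cast hN
  rw [muDerivRatio]
  simp only [Finset.sum_const, Finset.card_range, nsmul_eq_mul] at hle
  nlinarith

theorem muDerivRatio_inv_add_two_pos (hN : 0 < N) : 0 < muDerivRatio N (N + 2)⁻¹ := by
  have hlast : ((((N - 1 : ℕ) : ℝ) + 1) / ((N : ℝ) + 2)⁻¹ ^ (N - (N - 1))) ≤
      ∑ i ∈ range N, ((i : ℝ) + 1) / ((N : ℝ) + 2)⁻¹ ^ (N - i) :=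
    Finset.single_le_sum (f := fun i : ℕ => ((i : ℝ) + 1) / ((N : ℝ) + 2)⁻¹ ^ (N - i))
      (fun i _ => by positivity) (mem_range.2 (by omega))
  rw [Nat.sub_sub_self hN, pow_one, Nat.cast_pred hN, sub_add_cancel, div_inv_eq_mul] at hlast
  have hN' : (0 : ℝ) < N := by exact_mod_cast hN
  rw [muDerivRatio]
  nlinarith

theorem exists_muDerivRatio_eq_zero (hN : 0 < N) : ∃ θ₀ ∈ Ioo (0 : ℝ) 1, muDerivRatio N θ₀ = 0 := by
  have ha : (0 : ℝ) < ((N : ℝ) + 2)⁻¹ := by positivity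
  have ha1 : ((N : ℝ) + 2)⁻¹ ≤ 1 := inv_le_one_of_one_le₀ (by linarith [N.cast_nonneg (α := ℝ)])
  obtain ⟨θ₀, hθ₀, hzero⟩ := intermediate_value_Ioo' ha1
    ((continuousOn_muDerivRatio N).mono fun x hx => ha.trans_le hx.1)
    ⟨muDerivRatio_one_neg hN, muDerivRatio_inv_add_two_pos hN⟩
  exact ⟨θ₀, ⟨ha.trans hθ₀.1, hθ₀.2⟩, hzero⟩

theorem strictMonoOn_mu (hN : 0 < N) (hzero : muDerivRatio N θ₀ = 0) :
    StrictMonoOn (mu N) (Icc 0 θ₀) := by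
  refine strictMonoOn_of_deriv_pos (convex_Icc 0 θ₀) (continuous_mu N).continuousOn fun x hx => ?_
  rw [interior_Icc] at hx
  have hpos : 0 < muDerivRatio N x :=
    hzero ▸ strictAntiOn_muDerivRatio hN hx.1 (hx.1.trans hx.2) hx.2
  rw [(hasDerivAt_mu hx.1).deriv]
  exact mul_pos (pow_pos hx.1 N) hpos

theorem strictAntiOn_mu (hN : 0 < N) (hθ₀ : 0 < θ₀) (hzero : muDerivRatio N θ₀ = 0) :
    StrictAntiOn (mu N) (Icc θ₀ 1) := by
  refine strictAntiOn_of_deriv_neg (convex_Icc θ₀ 1) (continuous_mu N).continuousOn fun x hx => ?_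
  rw [interior_Icc] at hx
  have hx0 : 0 < x := hθ₀.trans hx.1
  have hneg : muDerivRatio N x < 0 := hzero ▸ strictAntiOn_muDerivRatio hN hθ₀ hx0 hx.1
  rw [(hasDerivAt_mu hx0).deriv]
  exact mul_neg_of_pos_of_neg (pow_pos hx0 N) hneg

theorem exists_strictMonoOn_strictAntiOn_mu (hN : 0 < N) :
    ∃ θ₀ ∈ Ioo (0 : ℝ) 1, StrictMonoOn (mu N) (Icc 0 θ₀) ∧ StrictAntiOn (mu N) (Icc θ₀ 1) := by
  obtain ⟨θ₀, hθ₀, hzero⟩ := exists_muDerivRatio_eq_zero hN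
  exact ⟨θ₀, hθ₀, strictMonoOn_mu hN hzero, strictAntiOn_mu hN hθ₀.1 hzero⟩

end Profile

section Counting

variable {N : ℕ} {k α r θ₀ : ℝ}

theorem not_exists_isEquilibrium (hk : 0 < k) (hr : 0 < r) (hθ₀ : θ₀ ∈ Ioo (0 : ℝ) 1)
    (hmono : StrictMonoOn (mu N) (Icc 0 θ₀)) (hanti : StrictAntiOn (mu N) (Icc θ₀ 1))
    (h : mu N θ₀ < α / r) : ¬ ∃ s : ℝ × (ℕ → ℝ), IsEquilibrium N k α r s.1 s.2 := by
  rintro ⟨s, hs⟩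
  obtain ⟨θ, hθ, hmu, -⟩ := (isEquilibrium_iff hk hr).1 hs
  rcases eq_or_ne θ θ₀ with rfl | hne
  · linarith
  · linarith [lt_of_strictMonoOn_of_strictAntiOn hmono hanti (Ioo_subset_Icc_self hθ₀)
      (Ico_subset_Icc_self hθ) hne]

theorem existsUnique_isEquilibrium (hk : 0 < k) (hr : 0 < r) (hθ₀ : θ₀ ∈ Ioo (0 : ℝ) 1)
    (hmono : StrictMonoOn (mu N) (Icc 0 θ₀)) (hanti : StrictAntiOn (mu N) (Icc θ₀ 1))
    (h : α / r = mu N θ₀) : ∃! s : ℝ × (ℕ → ℝ), IsEquilibrium N k α r s.1 s.2 := by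
  refine ⟨equilibriumOf k r θ₀,
    (isEquilibrium_iff hk hr).2 ⟨θ₀, Ioo_subset_Ico_self hθ₀, h.symm, rfl⟩, fun s hs => ?_⟩
  obtain ⟨θ, hθ, hmu, rfl⟩ := (isEquilibrium_iff hk hr).1 hs
  obtain rfl : θ = θ₀ := by
    by_contra hne
    exact (lt_of_strictMonoOn_of_strictAntiOn hmono hanti (Ioo_subset_Icc_self hθ₀)
      (Ico_subset_Icc_self hθ) hne).ne (hmu.trans h)
  rfl

theorem exists_two_isEquilibrium (hk : 0 < k) (hr : 0 < r) (hα : 0 < α)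
    (hθ₀ : θ₀ ∈ Ioo (0 : ℝ) 1) (hmono : StrictMonoOn (mu N) (Icc 0 θ₀))
    (hanti : StrictAntiOn (mu N) (Icc θ₀ 1)) (h : α / r < mu N θ₀) :
    ∃ s₁ s₂ : ℝ × (ℕ → ℝ), s₁ ≠ s₂ ∧
      IsEquilibrium N k α r s₁.1 s₁.2 ∧ IsEquilibrium N k α r s₂.1 s₂.2 ∧
      ∀ s : ℝ × (ℕ → ℝ), IsEquilibrium N k α r s.1 s.2 → s = s₁ ∨ s = s₂ := by
  have hpos : 0 < α / r := div_pos hα hr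
  obtain ⟨θ₁, hθ₁, θ₂, hθ₂, hmu₁, hmu₂, honly⟩ :=
    exists_pair_of_strictMonoOn_of_strictAntiOn (continuous_mu N).continuousOn hmono hanti
      (Ioo_subset_Icc_self hθ₀) (by simpa using hpos) (by simpa using hpos) h
  have hθ₁' : θ₁ ∈ Ico (0 : ℝ) 1 := ⟨hθ₁.1.le, hθ₁.2.trans hθ₀.2⟩
  have hθ₂' : θ₂ ∈ Ico (0 : ℝ) 1 := ⟨hθ₀.1.le.trans hθ₂.1.le, hθ₂.2⟩
  refine ⟨equilibriumOf k r θ₁, equilibriumOf k r θ₂,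
    (equilibriumOf_injective hr.ne').ne (hθ₁.2.trans hθ₂.1).ne,
    (isEquilibrium_iff hk hr).2 ⟨θ₁, hθ₁', hmu₁, rfl⟩,
    (isEquilibrium_iff hk hr).2 ⟨θ₂, hθ₂', hmu₂, rfl⟩, fun s hs => ?_⟩
  obtain ⟨θ, hθ, hmu, rfl⟩ := (isEquilibrium_iff hk hr).1 hs
  rcases honly θ (Ico_subset_Icc_self hθ) hmu with rfl | rfl
  exacts [.inl rfl, .inr rfl]

end Counting

end Silicosis

/-- There is a unique `μ* > 0` such that for all `α, r > 0` the silicosis system has no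
equilibria if `α/r > μ*`, exactly one if `α/r = μ*`, and exactly two if `0 < α/r < μ*`. -/
theorem stmt0 (N : ℕ) (hN : 1 ≤ N) (k : ℝ) (hk : 0 < k) :
    ∃! μstar : ℝ, 0 < μstar ∧
      ∀ α r : ℝ, 0 < α → 0 < r →
        ((μstar < α / r → ¬ ∃ s : ℝ × (ℕ → ℝ), IsEquilibrium N k α r s.1 s.2) ∧
         (α / r = μstar → ∃! s : ℝ × (ℕ → ℝ), IsEquilibrium N k α r s.1 s.2) ∧
         (α / r < μstar →
           ∃ s₁ s₂ : ℝ × (ℕ → ℝ), s₁ ≠ s₂ ∧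
             IsEquilibrium N k α r s₁.1 s₁.2 ∧ IsEquilibrium N k α r s₂.1 s₂.2 ∧
             ∀ s : ℝ × (ℕ → ℝ), IsEquilibrium N k α r s.1 s.2 → s = s₁ ∨ s = s₂)) := by
  obtain ⟨θ₀, hθ₀, hmono, hanti⟩ := Silicosis.exists_strictMonoOn_strictAntiOn_mu hN
  have hpos : 0 < Silicosis.mu N θ₀ := by
    simpa using hmono (left_mem_Icc.2 hθ₀.1.le) (right_mem_Icc.2 hθ₀.1.le) hθ₀.1
  refine ⟨Silicosis.mu N θ₀, ⟨hpos, fun α r hα hr =>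
    ⟨Silicosis.not_exists_isEquilibrium hk hr hθ₀ hmono hanti,
      Silicosis.existsUnique_isEquilibrium hk hr hθ₀ hmono hanti,
      Silicosis.exists_two_isEquilibrium hk hr hα hθ₀ hmono hanti⟩⟩, fun μ ⟨hμ, hμcount⟩ => ?_⟩
  -- test a competing threshold `μ` at `α = μ`, `r = 1`
  obtain ⟨s, hs, hunique⟩ := (hμcount μ 1 hμ one_pos).2.1 (div_one μ)
  rcases lt_trichotomy μ (Silicosis.mu N θ₀) with hlt | heq | hgt
  · obtain ⟨s₁, s₂, hne, h₁, h₂, -⟩ := Silicosis.exists_two_isEquilibrium hk one_pos hμ hθ₀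
      hmono hanti (by rwa [div_one])
    exact absurd ((hunique s₁ h₁).trans (hunique s₂ h₂).symm) hne
  · exact heq
  · exact absurd ⟨s, hs⟩
      (Silicosis.not_exists_isEquilibrium hk one_pos hθ₀ hmono hanti (by rwa [div_one]))
end

section
/- For every positive integer N, the polynomial p_N is strictly decreasing on the interval (0, (N+1)/(N+2)) and strictly increasing on the interval ((N+1)/(N+2), 1). -/
/-- The polynomial `p_N(y) = 1 - (N+1)² y^N + N(2N+3) y^{N+1} - N(N+1) y^{N+2}`. -/
noncomputable def pN (N : ℕ) (y : ℝ) : ℝ :=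
  1 - ((N : ℝ) + 1) ^ 2 * y ^ N + (N : ℝ) * (2 * (N : ℝ) + 3) * y ^ (N + 1)
    - (N : ℝ) * ((N : ℝ) + 1) * y ^ (N + 2)

/-! For `N ≥ 1` the derivative factors as `p_N'(y) = N (N+1) y^{N-1} (1 - y) ((N+2) y - (N+1))`,
so on `(0, 1)` it has the sign of `(N+2) y - (N+1)`. The statements below are indexed by
`N + 1` to avoid the exponent `N - 1`. -/

open Set

lemma hasDerivAt_pN_succ (N : ℕ) (y : ℝ) :
    HasDerivAt (pN (N + 1))
      (((N : ℝ) + 1) * ((N : ℝ) + 2) * y ^ N * (1 - y) * (((N : ℝ) + 3) * y - ((N : ℝ) + 2))) y := by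
  set n : ℝ := ((N + 1 : ℕ) : ℝ) with hn
  have h := ((((hasDerivAt_pow (N + 1) y).const_mul ((n + 1) ^ 2)).const_sub 1).add
      ((hasDerivAt_pow (N + 1 + 1) y).const_mul (n * (2 * n + 3)))).sub
      ((hasDerivAt_pow (N + 1 + 2) y).const_mul (n * (n + 1)))
  refine h.congr_deriv ?_
  simp only [hn, Nat.add_sub_cancel, show N + 1 + 2 - 1 = N + 2 by omega]
  push_cast
  ring

lemma continuous_pN_succ (N : ℕ) : Continuous (pN (N + 1)) :=
  continuous_iff_continuousAt.2 fun y => (hasDerivAt_pN_succ N y).continuousAt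

lemma strictAntiOn_pN_succ (N : ℕ) :
    StrictAntiOn (pN (N + 1)) (Ioo 0 (((N : ℝ) + 2) / ((N : ℝ) + 3))) := by
  refine strictAntiOn_of_deriv_neg (convex_Ioo _ _) (continuous_pN_succ N).continuousOn
    fun y hy => ?_
  rw [interior_Ioo] at hy
  obtain ⟨hy0, hyc⟩ := hy
  have hy1 : y < 1 := hyc.trans ((div_lt_one (by positivity)).2 (by linarith))
  have hlin : ((N : ℝ) + 3) * y - ((N : ℝ) + 2) < 0 := by
    rw [lt_div_iff₀ (by positivity)] at hyc
    linarith
  have hy1' : 0 < 1 - y := sub_pos.2 hy1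
  rw [(hasDerivAt_pN_succ N y).deriv]
  exact mul_neg_of_pos_of_neg (by positivity) hlin

lemma strictMonoOn_pN_succ (N : ℕ) :
    StrictMonoOn (pN (N + 1)) (Ioo (((N : ℝ) + 2) / ((N : ℝ) + 3)) 1) := by
  refine strictMonoOn_of_deriv_pos (convex_Ioo _ _) (continuous_pN_succ N).continuousOn
    fun y hy => ?_
  rw [interior_Ioo] at hy
  obtain ⟨hyc, hy1⟩ := hy
  have hy0 : 0 < y := lt_trans (by positivity) hyc
  have hlin : 0 < ((N : ℝ) + 3) * y - ((N : ℝ) + 2) := by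
    rw [div_lt_iff₀ (by positivity)] at hyc
    linarith
  have hy1' : 0 < 1 - y := sub_pos.2 hy1
  rw [(hasDerivAt_pN_succ N y).deriv]
  exact mul_pos (by positivity) hlin

theorem stmt5 (N : ℕ) (hN : 1 ≤ N) :
    StrictAntiOn (pN N) (Set.Ioo (0 : ℝ) (((N : ℝ) + 1) / ((N : ℝ) + 2))) ∧
    StrictMonoOn (pN N) (Set.Ioo (((N : ℝ) + 1) / ((N : ℝ) + 2)) 1) := by
  obtain ⟨M, rfl⟩ := Nat.exists_eq_add_of_le' hN
  have hc : (((M + 1 : ℕ) : ℝ) + 1) / (((M + 1 : ℕ) : ℝ) + 2) = ((M : ℝ) + 2) / ((M : ℝ) + 3) := by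
    push_cast
    ring
  rw [hc]
  exact ⟨strictAntiOn_pN_succ M, strictMonoOn_pN_succ M⟩
end

section
/- For every positive integer N, the polynomial p_N has exactly one zero y* in the open interval (0,1), and this zero satisfies y* < (N+1)/(N+2). Consequently, y* is the unique critical point of F̃_N in (0,1) (the unique y ∈ (0,1) with F̃_N′(y) = 0). -/
/-- The bifurcation function `F̃_N(y) = (y/(1-y)) (1 - (N+1) y^N + N y^{N+1})`. -/
noncomputable def Ftilde (N : ℕ) (y : ℝ) : ℝ :=
  (y / (1 - y)) * (1 - ((N : ℝ) + 1) * y ^ N + (N : ℝ) * y ^ (N + 1))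

/-!
For `N ≥ 1`, `p_N' y = N (N+1) y^(N-1) (1-y) ((N+2) y - (N+1))`, so `p_N` strictly decreases on
`[0, c]` and strictly increases on `[c, 1]`, where `c = (N+1)/(N+2)`. Since `p_N 0 = 1` and
`p_N 1 = 0`, the increasing branch is negative on `[c, 1)`, and the decreasing branch crosses zero
exactly once, inside `(0, c)`. The critical points of `F̃_N` are the zeros of
`F̃_N' = p_N / (1 - y)²`.
-/

open Set

lemma exists_zero_unique_of_strictAntiOn_of_strictMonoOn {f : ℝ → ℝ} {a b c : ℝ}
    (hac : a < c) (hcb : c < b) (hf : ContinuousOn f (Icc a c))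
    (hanti : StrictAntiOn f (Icc a c)) (hmono : StrictMonoOn f (Icc c b))
    (ha : 0 < f a) (hb : f b = 0) :
    ∃ x ∈ Ioo a c, f x = 0 ∧ ∀ y ∈ Ioo a b, f y = 0 → y = x := by
  have hneg_of_ge : ∀ y ∈ Ico c b, f y < 0 := fun y hy =>
    hb ▸ hmono ⟨hy.1, hy.2.le⟩ (right_mem_Icc.2 hcb.le) hy.2
  obtain ⟨x, hx, hfx⟩ :=
    intermediate_value_Ioo' hac.le hf ⟨hneg_of_ge c (left_mem_Ico.2 hcb), ha⟩
  refine ⟨x, hx, hfx, fun y hy hfy => ?_⟩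
  rcases le_or_gt c y with hcy | hyc
  · exact absurd hfy (hneg_of_ge y ⟨hcy, hy.2⟩).ne
  · exact hanti.injOn ⟨hy.1.le, hyc.le⟩ ⟨hx.1.le, hx.2.le⟩ (hfy.trans hfx.symm)

lemma hasDerivAt_pN (N : ℕ) (y : ℝ) :
    HasDerivAt (pN N)
      (N * (N + 1) * y ^ (N - 1) * (1 - y) * ((N + 2) * y - (N + 1))) y := by
  rcases N with _ | m
  · have hzero : pN 0 = fun _ => 0 := by
      funext z
      simp [pN]
    simpa [hzero] using hasDerivAt_const y (0 : ℝ)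
  · unfold pN
    refine ((((hasDerivAt_pow (m + 1) y).const_mul _).const_sub 1).add
      ((hasDerivAt_pow (m + 1 + 1) y).const_mul _) |>.sub
      ((hasDerivAt_pow (m + 1 + 2) y).const_mul _)).congr_deriv ?_
    simp only [Nat.add_sub_cancel, Nat.reduceSubDiff]
    push_cast
    ring

lemma continuous_pN (N : ℕ) : Continuous (pN N) := by
  unfold pN
  fun_prop

lemma pN_apply_zero {N : ℕ} (hN : 1 ≤ N) : pN N 0 = 1 := by
  simp [pN, zero_pow (Nat.one_le_iff_ne_zero.1 hN)]

lemma pN_apply_one (N : ℕ) : pN N 1 = 0 := by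
  simp only [pN, one_pow]
  ring

lemma strictAntiOn_pN {N : ℕ} (hN : 1 ≤ N) :
    StrictAntiOn (pN N) (Icc 0 ((N + 1) / (N + 2))) := by
  refine strictAntiOn_of_deriv_neg (convex_Icc _ _)
    (continuous_pN N).continuousOn fun y hy => ?_
  rw [interior_Icc] at hy
  obtain ⟨hy0, hyc⟩ := hy
  rw [lt_div_iff₀ (by positivity)] at hyc
  rw [(hasDerivAt_pN N y).deriv]
  exact mul_neg_of_pos_of_neg (mul_pos (by positivity) (by nlinarith)) (by linarith)

lemma strictMonoOn_pN {N : ℕ} (hN : 1 ≤ N) :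
    StrictMonoOn (pN N) (Icc ((N + 1) / (N + 2)) 1) := by
  refine strictMonoOn_of_deriv_pos (convex_Icc _ _)
    (continuous_pN N).continuousOn fun y hy => ?_
  rw [interior_Icc] at hy
  obtain ⟨hcy, hy1⟩ := hy
  have hy0 : 0 < y := lt_trans (by positivity) hcy
  rw [div_lt_iff₀ (by positivity)] at hcy
  rw [(hasDerivAt_pN N y).deriv]
  exact mul_pos (mul_pos (by positivity) (by linarith)) (by linarith)

lemma hasDerivAt_Ftilde (N : ℕ) {y : ℝ} (hy : y ≠ 1) :
    HasDerivAt (Ftilde N) (pN N y / (1 - y) ^ 2) y := by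
  -- as a single quotient no `y ^ (N - 1)` appears, so no case split on `N` is needed
  have hF : Ftilde N = fun z : ℝ => (z - (N + 1) * z ^ (N + 1) + N * z ^ (N + 2)) / (1 - z) := by
    funext z
    simp only [Ftilde]
    ring
  rw [hF]
  refine ((((hasDerivAt_id' y).sub ((hasDerivAt_pow (N + 1) y).const_mul _)).add
    ((hasDerivAt_pow (N + 2) y).const_mul _)).div ((hasDerivAt_id' y).const_sub 1)
    (sub_ne_zero.2 hy.symm)).congr_deriv ?_
  simp only [pN, Pi.add_apply, Pi.sub_apply, Nat.add_sub_cancel, Nat.reduceSubDiff]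
  push_cast
  ring

/-- `p_N` has exactly one zero `y*` in `(0,1)`, it satisfies `y* < (N+1)/(N+2)`, and
`y*` is the unique critical point of `F̃_N` in `(0,1)`. -/
theorem stmt6 (N : ℕ) (hN : 1 ≤ N) :
    ∃ ystar : ℝ, ystar ∈ Set.Ioo (0 : ℝ) 1 ∧ pN N ystar = 0 ∧
      ystar < ((N : ℝ) + 1) / ((N : ℝ) + 2) ∧
      (∀ y ∈ Set.Ioo (0 : ℝ) 1, pN N y = 0 → y = ystar) ∧
      (∀ y ∈ Set.Ioo (0 : ℝ) 1, deriv (Ftilde N) y = 0 ↔ y = ystar) := by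
  have hc0 : (0 : ℝ) < (N + 1) / (N + 2) := by positivity
  have hc1 : ((N : ℝ) + 1) / (N + 2) < 1 := by
    rw [div_lt_one (by positivity)]
    linarith
  obtain ⟨ystar, hmem, hzero, huniq⟩ :=
    exists_zero_unique_of_strictAntiOn_of_strictMonoOn hc0 hc1
      (continuous_pN N).continuousOn
      (strictAntiOn_pN hN) (strictMonoOn_pN hN) (by norm_num [pN_apply_zero hN])
      (pN_apply_one N)
  refine ⟨ystar, ⟨hmem.1, hmem.2.trans hc1⟩, hzero, hmem.2, huniq, fun y hy => ?_⟩
  rw [(hasDerivAt_Ftilde N hy.2.ne).deriv, div_eq_zero_iff,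
    or_iff_left (pow_ne_zero 2 (sub_ne_zero.2 hy.2.ne'))]
  exact ⟨huniq y hy, fun hyy => hyy ▸ hzero⟩
end

section
/- Let N be a positive integer and set μ* := F̃_N(y*). Then μ* > 0, and for every real μ > 0: the equation F̃_N(y) = μ has no solution y ∈ (0,1) if μ > μ*; exactly one solution y ∈ (0,1) if μ = μ*; and exactly two solutions y ∈ (0,1) if 0 < μ < μ*. -/
open Set
open Finset (range mem_range mul_sum sum_congr sum_eq_single_of_mem sum_range_succ)

noncomputable def Fpoly (N : ℕ) (y : ℝ) : ℝ :=
  ∑ k ∈ range N, y ^ (k + 1) - N * y ^ (N + 1)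

noncomputable def Fpoly' (N : ℕ) (y : ℝ) : ℝ :=
  ∑ k ∈ range N, ((k : ℝ) + 1) * y ^ k - N * (N + 1) * y ^ N

lemma one_sub_mul_sum_succ_mul_pow {R : Type*} [CommRing R] (N : ℕ) (y : R) :
    (1 - y) * ∑ k ∈ range N, ((k : R) + 1) * y ^ k = ∑ k ∈ range N, y ^ k - N * y ^ N := by
  induction N with
  | zero => simp
  | succ n ih =>
    rw [sum_range_succ, sum_range_succ]
    push_cast
    linear_combination ih

lemma Ftilde_eq_Fpoly {N : ℕ} {y : ℝ} (hy : y ≠ 1) : Ftilde N y = Fpoly N y := by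
  have hy' : 1 - y ≠ 0 := sub_ne_zero.2 hy.symm
  have hfactor : 1 - ((N : ℝ) + 1) * y ^ N + N * y ^ (N + 1)
      = (1 - y) * (∑ k ∈ range N, y ^ k - N * y ^ N) := by
    rw [mul_sub, mul_neg_geom_sum]; ring
  have hshift : y * ∑ k ∈ range N, y ^ k = ∑ k ∈ range N, y ^ (k + 1) := by
    rw [mul_sum]
    exact sum_congr rfl fun k _ => by ring
  rw [Ftilde, hfactor, Fpoly, ← hshift]
  field_simp
  ring

lemma pN_eq_sq_mul_Fpoly' (N : ℕ) (y : ℝ) : pN N y = (1 - y) ^ 2 * Fpoly' N y := by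
  have h : (1 - y) ^ 2 * ∑ k ∈ range N, ((k : ℝ) + 1) * y ^ k
      = 1 - y ^ N - N * y ^ N * (1 - y) := by
    rw [sq, mul_assoc, one_sub_mul_sum_succ_mul_pow, mul_sub, mul_neg_geom_sum]; ring
  rw [pN, Fpoly', mul_sub, h]
  ring

lemma hasDerivAt_Fpoly (N : ℕ) (y : ℝ) : HasDerivAt (Fpoly N) (Fpoly' N y) y := by
  have hsum : HasDerivAt (fun x : ℝ => ∑ k ∈ range N, x ^ (k + 1))
      (∑ k ∈ range N, ((k : ℝ) + 1) * y ^ k) y :=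
    HasDerivAt.fun_sum fun k _ => by simpa using hasDerivAt_pow (k + 1) y
  have hlast : HasDerivAt (fun x : ℝ => N * x ^ (N + 1)) (N * (N + 1) * y ^ N) y := by
    simpa [mul_assoc] using (hasDerivAt_pow (N + 1) y).const_mul (N : ℝ)
  exact hsum.fun_sub hlast

lemma continuous_Fpoly (N : ℕ) : Continuous (Fpoly N) := by
  unfold Fpoly; fun_prop

lemma continuous_Fpoly' (N : ℕ) : Continuous (Fpoly' N) := by
  unfold Fpoly'; fun_prop

@[simp] lemma Fpoly_zero (N : ℕ) : Fpoly N 0 = 0 := by simp [Fpoly]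

@[simp] lemma Fpoly_one (N : ℕ) : Fpoly N 1 = 0 := by simp [Fpoly]

lemma Fpoly'_zero {N : ℕ} (hN : N ≠ 0) : Fpoly' N 0 = 1 := by
  rw [Fpoly', sum_eq_single_of_mem 0 (mem_range.2 (Nat.pos_of_ne_zero hN))]
  · simp [zero_pow hN]
  · intro k _ hk; simp [zero_pow hk]

lemma Fpoly'_one_neg {N : ℕ} (hN : N ≠ 0) : Fpoly' N 1 < 0 := by
  have hgauss : ∀ m : ℕ, ∑ k ∈ range m, ((k : ℝ) + 1) = m * (m + 1) / 2 := by
    intro m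
    induction m with
    | zero => simp
    | succ n ih => rw [sum_range_succ, ih]; push_cast; ring
  have hN' : (1 : ℝ) ≤ N := by exact_mod_cast Nat.one_le_iff_ne_zero.2 hN
  simp only [Fpoly', one_pow, mul_one, hgauss]
  nlinarith

lemma IsPreconnected.forall_pos_of_ne_zero {s : Set ℝ} {g : ℝ → ℝ} (hs : IsPreconnected s)
    (hg : ContinuousOn g s) {x₀ : ℝ} (hx₀ : x₀ ∈ s) (hpos : 0 < g x₀)
    (hne : ∀ x ∈ s, g x ≠ 0) : ∀ x ∈ s, 0 < g x := by
  intro x hx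
  by_contra! hle
  obtain ⟨z, hz, hz0⟩ := hs.intermediate_value hx hx₀ hg ⟨hle, hpos.le⟩
  exact hne z hz hz0

section Unimodal

variable {g : ℝ → ℝ} {a b c : ℝ}
  (hmono : StrictMonoOn g (Icc a c)) (hanti : StrictAntiOn g (Icc c b))
include hmono hanti

lemma unimodal_apply_lt {y : ℝ} (hy : y ∈ Icc a b) (hne : y ≠ c) : g y < g c := by
  rcases hne.lt_or_gt with h | h
  · exact hmono ⟨hy.1, h.le⟩ ⟨hy.1.trans h.le, le_rfl⟩ h
  · exact hanti ⟨le_rfl, h.le.trans hy.2⟩ ⟨h.le, hy.2⟩ h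

lemma unimodal_eq_or_eq {μ y y₁ y₂ : ℝ} (hy₁ : y₁ ∈ Icc a c) (hy₂ : y₂ ∈ Icc c b)
    (h₁ : g y₁ = μ) (h₂ : g y₂ = μ) (hy : y ∈ Icc a b) (h : g y = μ) : y = y₁ ∨ y = y₂ := by
  rcases le_total y c with hc | hc
  · exact .inl (hmono.injOn ⟨hy.1, hc⟩ hy₁ (h.trans h₁.symm))
  · exact .inr (hanti.injOn ⟨hc, hy.2⟩ hy₂ (h.trans h₂.symm))

end Unimodal

lemma exists_apply_eq_of_lt_of_lt {g : ℝ → ℝ} {a b c μ : ℝ} (hg : ContinuousOn g (Icc a b))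
    (hac : a ≤ c) (hcb : c ≤ b) (ha : g a < μ) (hb : g b < μ) (hμ : μ < g c) :
    (∃ y ∈ Ioo a c, g y = μ) ∧ ∃ y ∈ Ioo c b, g y = μ :=
  ⟨intermediate_value_Ioo hac (hg.mono (Icc_subset_Icc_right hcb)) ⟨ha, hμ⟩,
    intermediate_value_Ioo' hcb (hg.mono (Icc_subset_Icc_left hac)) ⟨hb, hμ⟩⟩

section CriticalPoint

variable {N : ℕ} {ystar : ℝ} (hN : N ≠ 0)
  (huniq : ∀ y ∈ Ioo (0 : ℝ) 1, pN N y = 0 → y = ystar)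
include hN huniq

lemma Fpoly'_ne_zero {y : ℝ} (hy : y ∈ Icc 0 1) (hne : y ≠ ystar) : Fpoly' N y ≠ 0 := by
  rcases hy.1.eq_or_lt with rfl | h0
  · rw [Fpoly'_zero hN]; exact one_ne_zero
  rcases hy.2.eq_or_lt with rfl | h1
  · exact (Fpoly'_one_neg hN).ne
  exact fun h => hne (huniq y ⟨h0, h1⟩ (by rw [pN_eq_sq_mul_Fpoly', h, mul_zero]))

lemma strictMonoOn_Fpoly (hmem : ystar ∈ Ioo (0 : ℝ) 1) :
    StrictMonoOn (Fpoly N) (Icc 0 ystar) := by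
  have hpos : ∀ y ∈ Ico 0 ystar, 0 < Fpoly' N y :=
    isPreconnected_Ico.forall_pos_of_ne_zero (continuous_Fpoly' N).continuousOn
      (left_mem_Ico.2 hmem.1) (by rw [Fpoly'_zero hN]; exact one_pos)
      fun y hy => Fpoly'_ne_zero hN huniq ⟨hy.1, hy.2.le.trans hmem.2.le⟩ hy.2.ne
  refine strictMonoOn_of_deriv_pos (convex_Icc _ _) (continuous_Fpoly N).continuousOn
    fun y hy => ?_
  rw [interior_Icc] at hy
  rw [(hasDerivAt_Fpoly N y).deriv]
  exact hpos y (Ioo_subset_Ico_self hy)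

lemma strictAntiOn_Fpoly (hmem : ystar ∈ Ioo (0 : ℝ) 1) :
    StrictAntiOn (Fpoly N) (Icc ystar 1) := by
  have hneg : ∀ y ∈ Ioc ystar 1, 0 < -Fpoly' N y :=
    isPreconnected_Ioc.forall_pos_of_ne_zero (continuous_Fpoly' N).neg.continuousOn
      (right_mem_Ioc.2 hmem.2) (neg_pos.2 (Fpoly'_one_neg hN))
      fun y hy => neg_ne_zero.2 (Fpoly'_ne_zero hN huniq
        ⟨hmem.1.le.trans hy.1.le, hy.2⟩ hy.1.ne')
  refine strictAntiOn_of_deriv_neg (convex_Icc _ _) (continuous_Fpoly N).continuousOn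
    fun y hy => ?_
  rw [interior_Icc] at hy
  rw [(hasDerivAt_Fpoly N y).deriv]
  exact neg_pos.1 (hneg y (Ioo_subset_Ioc_self hy))

end CriticalPoint

theorem stmt7_general (N : ℕ) (hN : 1 ≤ N) (ystar : ℝ) (hmem : ystar ∈ Set.Ioo (0 : ℝ) 1)
    (huniq : ∀ y ∈ Set.Ioo (0 : ℝ) 1, pN N y = 0 → y = ystar) :
    0 < Ftilde N ystar ∧
    ∀ μ : ℝ, 0 < μ →
      ((Ftilde N ystar < μ → ¬ ∃ y ∈ Set.Ioo (0 : ℝ) 1, Ftilde N y = μ) ∧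
       (μ = Ftilde N ystar → ∃! y : ℝ, y ∈ Set.Ioo (0 : ℝ) 1 ∧ Ftilde N y = μ) ∧
       (μ < Ftilde N ystar →
         ∃ y₁ y₂ : ℝ, y₁ ≠ y₂ ∧
           (y₁ ∈ Set.Ioo (0 : ℝ) 1 ∧ Ftilde N y₁ = μ) ∧
           (y₂ ∈ Set.Ioo (0 : ℝ) 1 ∧ Ftilde N y₂ = μ) ∧
           ∀ y ∈ Set.Ioo (0 : ℝ) 1, Ftilde N y = μ → y = y₁ ∨ y = y₂)) := by
  have hN0 : N ≠ 0 := Nat.one_le_iff_ne_zero.1 hN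
  have hmono := strictMonoOn_Fpoly hN0 huniq hmem
  have hanti := strictAntiOn_Fpoly hN0 huniq hmem
  have hF : EqOn (Ftilde N) (Fpoly N) (Ioo 0 1) := fun y hy => Ftilde_eq_Fpoly hy.2.ne
  have hlt {y : ℝ} (hy : y ∈ Ioo 0 1) (hne : y ≠ ystar) : Ftilde N y < Fpoly N ystar :=
    hF hy ▸ unimodal_apply_lt hmono hanti (Ioo_subset_Icc_self hy) hne
  rw [hF hmem]
  have hmax_pos : 0 < Fpoly N ystar :=
    Fpoly_zero N ▸ hmono (left_mem_Icc.2 hmem.1.le) (right_mem_Icc.2 hmem.1.le) hmem.1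
  refine ⟨hmax_pos, fun μ hμ => ⟨?_, ?_, fun hμmax => ?_⟩⟩
  · rintro hμmax ⟨y, hy, rfl⟩
    rcases eq_or_ne y ystar with rfl | hne
    · exact hμmax.ne (hF hy).symm
    · exact (hlt hy hne).not_gt hμmax
  · rintro rfl
    refine ⟨ystar, ⟨hmem, hF hmem⟩, fun y ⟨hy, hFy⟩ => ?_⟩
    by_contra hne
    exact (hlt hy hne).ne hFy
  obtain ⟨⟨y₁, hy₁, h₁⟩, y₂, hy₂, h₂⟩ := exists_apply_eq_of_lt_of_lt
    (continuous_Fpoly N).continuousOn hmem.1.le hmem.2.le (by simpa using hμ) (by simpa using hμ)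
    hμmax
  have hy₁' : y₁ ∈ Ioo 0 1 := ⟨hy₁.1, hy₁.2.trans hmem.2⟩
  have hy₂' : y₂ ∈ Ioo 0 1 := ⟨hmem.1.trans hy₂.1, hy₂.2⟩
  refine ⟨y₁, y₂, (hy₁.2.trans hy₂.1).ne, ⟨hy₁', (hF hy₁').trans h₁⟩, ⟨hy₂', (hF hy₂').trans h₂⟩,
    fun y hy hFy => ?_⟩
  exact unimodal_eq_or_eq hmono hanti (Ioo_subset_Icc_self hy₁) (Ioo_subset_Icc_self hy₂)
    h₁ h₂ (Ioo_subset_Icc_self hy) ((hF hy).symm.trans hFy)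

/-- With `μ* := F̃_N(y*)` one has `μ* > 0`, and for `μ > 0` the equation `F̃_N(y) = μ` has
no solution in `(0,1)` if `μ > μ*`, exactly one if `μ = μ*`, exactly two if `0 < μ < μ*`. -/
theorem stmt7 (N : ℕ) (hN : 1 ≤ N) (ystar : ℝ) (hmem : ystar ∈ Set.Ioo (0 : ℝ) 1)
    (hzero : pN N ystar = 0)
    (huniq : ∀ y ∈ Set.Ioo (0 : ℝ) 1, pN N y = 0 → y = ystar) :
    0 < Ftilde N ystar ∧
    ∀ μ : ℝ, 0 < μ →
      ((Ftilde N ystar < μ → ¬ ∃ y ∈ Set.Ioo (0 : ℝ) 1, Ftilde N y = μ) ∧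
       (μ = Ftilde N ystar → ∃! y : ℝ, y ∈ Set.Ioo (0 : ℝ) 1 ∧ Ftilde N y = μ) ∧
       (μ < Ftilde N ystar →
         ∃ y₁ y₂ : ℝ, y₁ ≠ y₂ ∧
           (y₁ ∈ Set.Ioo (0 : ℝ) 1 ∧ Ftilde N y₁ = μ) ∧
           (y₂ ∈ Set.Ioo (0 : ℝ) 1 ∧ Ftilde N y₂ = μ) ∧
           ∀ y ∈ Set.Ioo (0 : ℝ) 1, Ftilde N y = μ → y = y₁ ∨ y = y₂)) :=
  stmt7_general N hN ystar hmem huniq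
end

section
/- For a positive integer N define q_N(y) := 1 − y^N [ 1 + (3/2) N (1−y) + (1/2) N² (1−y)² ]. Then for every real y, q_N(y) − p_N(y) = (1/2) y^N (1−y) N ( (N+2)(1−y) − 1 ). Consequently, if y ∈ (0, (N+1)/(N+2)) and p_N(y) = 0, then q_N(y) > 0. -/
/-- `q_N(y) := 1 - y^N [1 + (3/2) N (1-y) + (1/2) N² (1-y)²]`. -/
noncomputable def qN (N : ℕ) (y : ℝ) : ℝ :=
  1 - y ^ N * (1 + (3 / 2) * (N : ℝ) * (1 - y) + (1 / 2) * (N : ℝ) ^ 2 * (1 - y) ^ 2)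

theorem stmt12 (N : ℕ) (hN : 1 ≤ N) :
    (∀ y : ℝ, qN N y - pN N y
        = (1 / 2) * y ^ N * (1 - y) * (N : ℝ) * (((N : ℝ) + 2) * (1 - y) - 1)) ∧
    (∀ y : ℝ, y ∈ Set.Ioo (0 : ℝ) (((N : ℝ) + 1) / ((N : ℝ) + 2)) → pN N y = 0 → 0 < qN N y) := by
  have key : ∀ y : ℝ, qN N y - pN N y
      = (1 / 2) * y ^ N * (1 - y) * (N : ℝ) * (((N : ℝ) + 2) * (1 - y) - 1) := by
    intro y
    simp only [qN, pN, pow_add, pow_one, pow_two]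
    ring
  refine ⟨key, fun y hy hp => ?_⟩
  obtain ⟨hy0, hy1⟩ := hy
  have hN2 : (0:ℝ) < (N : ℝ) + 2 := by positivity
  have hyy : y < 1 := lt_of_lt_of_le hy1 (by
    rw [div_le_one hN2]; linarith)
  have hfac : 0 < ((N : ℝ) + 2) * (1 - y) - 1 := by
    have h := (lt_div_iff₀ hN2).mp hy1
    nlinarith
  have hNpos : (0:ℝ) < (N : ℝ) := by exact_mod_cast hN
  have : 0 < qN N y - pN N y := by
    rw [key y]
    have h1 : (0:ℝ) < y ^ N := pow_pos hy0 N
    have h2 : (0:ℝ) < 1 - y := by linarith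
    have := mul_pos (mul_pos (mul_pos (mul_pos (by norm_num : (0:ℝ) < 1/2) h1) h2) hNpos) hfac
    linarith
  linarith [hp ▸ this]
end

section
/- Let N be a positive integer and y ∈ (0,1). For λ ∈ ℂ with 1 + λ ≠ 0 and Δ := 1 + λ(1−y) ≠ 0, define G_N(λ, y) := [ 1 + (1−y) ( (N(1−y)(1+λ) + 1) Σ_{i=0}^{N} Δ^i − 1 ) Δ^{−(N+1)} ] (1+λ)^{−1}. Then for every real ω ≠ 0, |G_N(iω, y)| < 1 + N(1−y) + N(N+1)(1−y)². -/
/-!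
With `Δ = 1 + λ(1-y)` and `s = Σ_{i≤N} Δ^i`, the identity `s (Δ - 1) = Δ^(N+1) - 1` collapses
`G_N` to `y Δ^{-(N+1)} (1+λ)^{-1} + (N(1-y)+1)(1-y) s Δ^{-(N+1)}`. On the imaginary axis
`|Δ| > 1` and `|1+λ| > 1`, so the first term has modulus at most `y` and, since
`|s| ≤ (N+1)|Δ|^N`, the second has modulus below `(N(1-y)+1)(1-y)(N+1)`; the two bounds add up
to `1 + N(1-y) + N(N+1)(1-y)²`.
-/

open Finset

theorem norm_geom_sum_le {K : Type*} [NormedDivisionRing K] {z : K} (hz : 1 ≤ ‖z‖) (n : ℕ) :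
    ‖∑ i ∈ range (n + 1), z ^ i‖ ≤ (n + 1) * ‖z‖ ^ n := by
  calc ‖∑ i ∈ range (n + 1), z ^ i‖ ≤ ∑ i ∈ range (n + 1), ‖z‖ ^ i := by
        simpa only [norm_pow] using norm_sum_le (range (n + 1)) (z ^ ·)
    _ ≤ ∑ _i ∈ range (n + 1), ‖z‖ ^ n :=
        sum_le_sum fun i hi => pow_le_pow_right₀ hz (mem_range_succ_iff.mp hi)
    _ = (n + 1) * ‖z‖ ^ n := by simp

theorem norm_geom_sum_mul_inv_pow_lt {K : Type*} [NormedDivisionRing K] {z : K} (hz : 1 < ‖z‖)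
    (n : ℕ) : ‖(∑ i ∈ range (n + 1), z ^ i) * (z ^ (n + 1))⁻¹‖ < n + 1 := by
  have hz0 : 0 < ‖z‖ := one_pos.trans hz
  calc ‖(∑ i ∈ range (n + 1), z ^ i) * (z ^ (n + 1))⁻¹‖
      ≤ (n + 1) * ‖z‖ ^ n * (‖z‖ ^ (n + 1))⁻¹ := by
        rw [norm_mul, norm_inv, norm_pow]
        gcongr
        exact norm_geom_sum_le hz.le n
    _ = (n + 1) * ‖z‖⁻¹ := by rw [pow_succ]; field_simp
    _ < n + 1 := mul_lt_of_lt_one_right (by positivity) (inv_lt_one_of_one_lt₀ hz)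

theorem norm_mul_inv_mul_inv_le {K : Type*} [NormedDivisionRing K] (x : K) {a b : K}
    (ha : 1 ≤ ‖a‖) (hb : 1 ≤ ‖b‖) : ‖x * a⁻¹ * b⁻¹‖ ≤ ‖x‖ := by
  rw [norm_mul, norm_mul, norm_inv, norm_inv]
  calc ‖x‖ * ‖a‖⁻¹ * ‖b‖⁻¹ ≤ ‖x‖ * 1 * 1 := by gcongr <;> exact inv_le_one_of_one_le₀ ‹_›
    _ = ‖x‖ := by ring

theorem Complex.one_lt_norm_one_add_I_mul {t : ℝ} (ht : t ≠ 0) : 1 < ‖1 + I * t‖ := by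
  rw [mul_comm, ← ofReal_one, norm_add_mul_I, Real.lt_sqrt zero_le_one]
  have := pow_pos (abs_pos.mpr ht) 2
  rw [sq_abs] at this
  linarith

namespace Silicosis

/-- `G_N(λ, y)`, with `l` in place of `λ`. -/
def G {K : Type*} [Field K] (N : ℕ) (y l : K) : K :=
  (1 + (1 - y) * (((N * (1 - y) * (1 + l) + 1) * ∑ i ∈ range (N + 1), (1 + l * (1 - y)) ^ i - 1) *
    ((1 + l * (1 - y)) ^ (N + 1))⁻¹)) * (1 + l)⁻¹

theorem G_eq {K : Type*} [Field K] (N : ℕ) (y l : K) (hΔ : 1 + l * (1 - y) ≠ 0)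
    (hl : 1 + l ≠ 0) :
    G N y l = y * ((1 + l * (1 - y)) ^ (N + 1))⁻¹ * (1 + l)⁻¹ +
      (N * (1 - y) + 1) * (1 - y) *
        ((∑ i ∈ range (N + 1), (1 + l * (1 - y)) ^ i) * ((1 + l * (1 - y)) ^ (N + 1))⁻¹) := by
  have hgeom := geom_sum_mul (1 + l * (1 - y)) (N + 1)
  rw [add_sub_cancel_left] at hgeom
  have hD := pow_ne_zero (N + 1) hΔ
  unfold G
  generalize ∑ i ∈ range (N + 1), (1 + l * (1 - y)) ^ i = s at hgeom ⊢
  generalize (1 + l * (1 - y)) ^ (N + 1) = D at hgeom hD ⊢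
  field_simp
  linear_combination -hgeom

end Silicosis

theorem stmt14_general (N : ℕ) (y : ℝ) (hy : y ∈ Set.Ioo (0 : ℝ) 1)
    (ω : ℝ) (hω : ω ≠ 0) :
    norm
        ((1 + (1 - (y : ℂ)) *
            ((((N : ℂ) * (1 - (y : ℂ)) * (1 + Complex.I * (ω : ℂ)) + 1) *
                  (∑ i ∈ Finset.range (N + 1),
                    (1 + Complex.I * (ω : ℂ) * (1 - (y : ℂ))) ^ i) - 1) *
              ((1 + Complex.I * (ω : ℂ) * (1 - (y : ℂ))) ^ (N + 1))⁻¹)) *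
          (1 + Complex.I * (ω : ℂ))⁻¹)
      < 1 + (N : ℝ) * (1 - y) + (N : ℝ) * ((N : ℝ) + 1) * (1 - y) ^ 2 := by
  obtain ⟨hy0, hy1⟩ := hy
  have hΔ : 1 < ‖1 + Complex.I * ω * (1 - y)‖ := by
    simpa [mul_assoc] using
      Complex.one_lt_norm_one_add_I_mul (mul_ne_zero hω (sub_ne_zero.mpr hy1.ne'))
  have hl : 1 < ‖1 + Complex.I * ω‖ := Complex.one_lt_norm_one_add_I_mul hω
  change ‖Silicosis.G N (y : ℂ) (Complex.I * ω)‖ < _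
  rw [Silicosis.G_eq N _ _ (norm_pos_iff.mp (one_pos.trans hΔ))
    (norm_pos_iff.mp (one_pos.trans hl))]
  have hcoeff : ((N : ℂ) * (1 - y) + 1) * (1 - y) = (((N * (1 - y) + 1) * (1 - y) : ℝ) : ℂ) := by
    push_cast; ring
  have hcoeff_pos : 0 < (N * (1 - y) + 1) * (1 - y) := by
    have : 0 ≤ (N : ℝ) * (1 - y) := mul_nonneg N.cast_nonneg (by linarith)
    nlinarith
  rw [hcoeff]
  calc _ ≤ _ := norm_add_le _ _
    _ < y + (N * (1 - y) + 1) * (1 - y) * (N + 1) := by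
      refine add_lt_add_of_le_of_lt ?_ ?_
      · have hΔpow : 1 ≤ ‖(1 + Complex.I * ω * (1 - y)) ^ (N + 1)‖ := by
          rw [norm_pow]; exact one_le_pow₀ hΔ.le
        simpa [abs_of_pos hy0] using norm_mul_inv_mul_inv_le (y : ℂ) hΔpow hl.le
      · rw [norm_mul, Complex.norm_real, Real.norm_of_nonneg hcoeff_pos.le]
        exact mul_lt_mul_of_pos_left (norm_geom_sum_mul_inv_pow_lt hΔ N) hcoeff_pos
    _ = _ := by ring

/-- The bound `|G_N(iω, y)| < 1 + N(1-y) + N(N+1)(1-y)²` for real `ω ≠ 0`, where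
`G_N(λ,y) = [1 + (1-y)((N(1-y)(1+λ)+1) Σ_{i=0}^N Δ^i - 1) Δ^{-(N+1)}] (1+λ)^{-1}`
and `Δ = 1 + λ(1-y)`. -/
theorem stmt14 (N : ℕ) (hN : 1 ≤ N) (y : ℝ) (hy : y ∈ Set.Ioo (0 : ℝ) 1)
    (ω : ℝ) (hω : ω ≠ 0) :
    norm
        ((1 + (1 - (y : ℂ)) *
            ((((N : ℂ) * (1 - (y : ℂ)) * (1 + Complex.I * (ω : ℂ)) + 1) *
                  (∑ i ∈ Finset.range (N + 1),
                    (1 + Complex.I * (ω : ℂ) * (1 - (y : ℂ))) ^ i) - 1) *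
              ((1 + Complex.I * (ω : ℂ) * (1 - (y : ℂ))) ^ (N + 1))⁻¹)) *
          (1 + Complex.I * (ω : ℂ))⁻¹)
      < 1 + (N : ℝ) * (1 - y) + (N : ℝ) * ((N : ℝ) + 1) * (1 - y) ^ 2 :=
  stmt14_general N y hy ω hω
end

section
/- Let N be a positive integer, ρ > 0, and y ∈ (0,1) with p_N(y) < 0 (equivalently, y* < y < 1). Then A has a positive real eigenvalue: there exists a real λ > 0 with det(A − λ I_{N+5}) = 0. -/
/-- The `(N+5)×(N+5)` Jacobian matrix `A(N,ρ,y)` of the reduced silicosis system at the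
equilibrium parametrized by `y`, with `ρ = kr` (block form `[[B,C],[D,E]]`). -/
noncomputable def Amat (N : ℕ) (ρ y : ℝ) : Matrix (Fin (N + 5)) (Fin (N + 5)) ℝ :=
  Matrix.of fun i j =>
    if i.val = 0 then
      if j.val = 0 then -ρ
      else if j.val = 1 then -y / (1 - y)
      else if j.val = 2 then 1
      else 0
    else if i.val = 1 then
      if j.val = 1 then -1 else 0
    else if i.val = 2 then
      if j.val = 0 then ρ * y ^ N * (1 + (N : ℝ) * (1 - y))
      else if j.val = 2 then -1
      else if j.val = 3 then y / (1 - y)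
      else if j.val = N + 4 then (N : ℝ) * y / (1 - y)
      else 0
    else if i.val = 3 then
      if j.val = 0 then ρ * y ^ (N - 1) * (1 - y)
      else if j.val = 3 then -1
      else if j.val = N + 3 then y / (1 - y)
      else 0
    else
      if j.val = 0 then
        if i.val = 4 then -ρ * (1 - y) else ρ * (1 - y) ^ 2 * y ^ (i.val - 5)
      else if j.val = i.val then -1 / (1 - y)
      else if j.val + 1 = i.val ∧ 4 ≤ j.val then y / (1 - y)
      else 0

/-!
Order the coordinates as `Fin 4 ⊕ Fin (N + 1)`, so that `A = [[B, C], [D, E]]`. The block `E` is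
lower bidiagonal with diagonal `-1/(1-y)`, hence invertible, and `D` has a single nonzero column,
so the Schur complement `B - C E⁻¹ D` only alters the first column of `B`; solving `E x = D e₀`
by forward substitution gives `det A = (-1/(1-y))^(N+1) · ρ · p_N(y)`. Thus
`(-1)^(N+5) det A = ρ p_N(y) / (1-y)^(N+1) < 0`, i.e. the characteristic polynomial of `A`
is negative at `0`; being monic, it has a positive root by the intermediate value theorem.
-/

open Matrix Polynomial Filter

theorem natCast_mul_pow_pred_mul {R : Type*} [CommSemiring R] (y : R) (k : ℕ) :
    (k : R) * y ^ (k - 1) * y = k * y ^ k := by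
  cases k <;> simp [pow_succ, mul_assoc]

theorem Matrix.det_fin_four_sparse {R : Type*} [CommRing R] (a b c d e f : R) :
    !![a, b, c, 0; 0, -1, 0, 0; d, 0, -1, e; f, 0, 0, -1].det = -a - c * d - c * e * f := by
  simp [det_succ_row_zero, Fin.sum_univ_succ, Fin.succAbove]
  ring

theorem Matrix.exists_pos_det_sub_smul_one_eq_zero {n : Type*} [Fintype n] [DecidableEq n]
    (M : Matrix n n ℝ) (h : (-1) ^ Fintype.card n * M.det < 0) :
    ∃ t : ℝ, 0 < t ∧ (M - t • 1).det = 0 := by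
  have eval_charpoly (t : ℝ) : M.charpoly.eval t = (-1) ^ Fintype.card n * (M - t • 1).det := by
    rw [eval_charpoly, ← det_neg, neg_sub, scalar_apply, smul_one_eq_diagonal]
  have h0 : M.charpoly.eval 0 < 0 := by simpa [eval_charpoly] using h
  have hdeg : 0 < M.charpoly.degree := by
    refine natDegree_pos_iff_degree_pos.mp (Nat.pos_of_ne_zero fun hd => ?_)
    rw [eq_one_of_monic_natDegree_zero (charpoly_monic M) hd, eval_one] at h0
    linarith
  have htop : Tendsto M.charpoly.eval atTop atTop :=
    tendsto_atTop_of_leadingCoeff_nonneg _ hdeg ((charpoly_monic M).leadingCoeff ▸ zero_le_one)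
  obtain ⟨b, hb, hb0⟩ := ((htop.eventually_gt_atTop 0).and (eventually_gt_atTop 0)).exists
  obtain ⟨t, ht, hroot⟩ :=
    intermediate_value_Ioo hb0.le M.charpoly.continuous.continuousOn ⟨h0, hb⟩
  refine ⟨t, ht.1, ?_⟩
  simpa [eval_charpoly] using hroot

namespace Silicosis

variable (N : ℕ) (ρ y : ℝ)

noncomputable def blockB : Matrix (Fin 4) (Fin 4) ℝ :=
  !![-ρ, -y / (1 - y), 1, 0;
    0, -1, 0, 0;
    ρ * y ^ N * (1 + N * (1 - y)), 0, -1, y / (1 - y);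
    ρ * y ^ (N - 1) * (1 - y), 0, 0, -1]

noncomputable def blockC : Matrix (Fin 4) (Fin (N + 1)) ℝ :=
  single 2 (Fin.last N) (N * y / (1 - y)) + single 3 ⟨N - 1, by omega⟩ (y / (1 - y))

noncomputable def columnD (i : Fin (N + 1)) : ℝ :=
  if i = 0 then -ρ * (1 - y) else ρ * (1 - y) ^ 2 * y ^ (i.val - 1)

noncomputable def blockE : Matrix (Fin (N + 1)) (Fin (N + 1)) ℝ :=
  of fun i j => if j = i then -1 / (1 - y) else if j.val + 1 = i.val then y / (1 - y) else 0

def splitIndex : Fin 4 ⊕ Fin (N + 1) ≃ Fin (N + 5) :=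
  finSumFinEquiv.trans (finCongr (by omega))

@[simp] theorem splitIndex_inl_val (i : Fin 4) : (splitIndex N (.inl i)).val = i.val := rfl

@[simp] theorem splitIndex_inr_val (i : Fin (N + 1)) :
    (splitIndex N (.inr i)).val = i.val + 4 := by
  simp [splitIndex]

theorem Amat_splitIndex_inl_inl (i j : Fin 4) :
    Amat N ρ y (splitIndex N (.inl i)) (splitIndex N (.inl j)) = blockB N ρ y i j := by
  fin_cases i <;> fin_cases j <;> simp [Amat, blockB, -Fin.val_eq_zero_iff]

theorem Amat_splitIndex_inl_inr (hN : 1 ≤ N) (i : Fin 4) (j : Fin (N + 1)) :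
    Amat N ρ y (splitIndex N (.inl i)) (splitIndex N (.inr j)) = blockC N y i j := by
  fin_cases i <;> simp [Amat, blockC, single_apply, Fin.ext_iff, -Fin.val_eq_zero_iff] <;>
    split_ifs <;> first | rfl | omega

theorem Amat_splitIndex_inr_inl (i : Fin (N + 1)) (j : Fin 4) :
    Amat N ρ y (splitIndex N (.inr i)) (splitIndex N (.inl j)) =
      vecMulVec (columnD N ρ y) (Pi.single 0 1) i j := by
  fin_cases j <;> simp [Amat, columnD, vecMulVec_apply, Fin.ext_iff, -Fin.val_eq_zero_iff]

theorem Amat_splitIndex_inr_inr (i j : Fin (N + 1)) :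
    Amat N ρ y (splitIndex N (.inr i)) (splitIndex N (.inr j)) = blockE N y i j := by
  simp [Amat, blockE, Fin.ext_iff, -Fin.val_eq_zero_iff]

theorem submatrix_Amat_eq_fromBlocks (hN : 1 ≤ N) :
    (Amat N ρ y).submatrix (splitIndex N) (splitIndex N) =
      fromBlocks (blockB N ρ y) (blockC N y) (vecMulVec (columnD N ρ y) (Pi.single 0 1))
        (blockE N y) := by
  ext (i | i) (j | j)
  · exact Amat_splitIndex_inl_inl N ρ y i j
  · exact Amat_splitIndex_inl_inr N ρ y hN i j
  · exact Amat_splitIndex_inr_inl N ρ y i j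
  · exact Amat_splitIndex_inr_inr N ρ y i j

noncomputable def solutionE (i : Fin (N + 1)) : ℝ :=
  ρ * (1 - y) ^ 2 * (y ^ i.val - i.val * (1 - y) * y ^ (i.val - 1))

theorem blockE_mulVec_solutionE (hy : y ≠ 1) :
    blockE N y *ᵥ solutionE N ρ y = columnD N ρ y := by
  have h1y : 1 - y ≠ 0 := sub_ne_zero.mpr hy.symm
  ext i
  simp only [mulVec, dotProduct, blockE, of_apply]
  induction i using Fin.cases with
  | zero =>
    rw [Finset.sum_eq_single 0 (fun j _ hj => by simp [hj]) (by simp)]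
    simp only [solutionE, columnD, if_true, Fin.val_zero, pow_zero, Nat.cast_zero, zero_mul,
      sub_zero, mul_one]
    field_simp
  | succ k =>
    rw [Finset.sum_eq_add_of_mem k.castSucc k.succ (Finset.mem_univ _) (Finset.mem_univ _)
      Fin.castSucc_lt_succ.ne fun j _ hj => ?_]
    · simp only [solutionE, columnD, if_neg Fin.castSucc_lt_succ.ne, if_pos, Fin.succ_ne_zero,
        if_false, Fin.val_succ, Fin.val_castSucc, Nat.add_sub_cancel, Nat.cast_add, Nat.cast_one]
      field_simp
      linear_combination (-(ρ * (1 - y))) * natCast_mul_pow_pred_mul y (k : ℕ)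
    · have : j.val ≠ k.val := fun h => hj.1 (Fin.ext h)
      simp [hj.2, this]

theorem det_blockE : (blockE N y).det = (-1 / (1 - y)) ^ (N + 1) := by
  have hlower : (blockE N y).IsLowerTriangular := fun i j hij => by
    have hij : i < j := hij
    simp [blockE, hij.ne', show j.val + 1 ≠ i.val by omega]
  rw [det_of_isLowerTriangular _ hlower]
  simp [blockE, div_pow]

theorem blockC_mulVec (hN : 1 ≤ N) (x : Fin (N + 1) → ℝ) :
    blockC N y *ᵥ x =
      ![0, 0, N * y / (1 - y) * x (Fin.last N), y / (1 - y) * x ⟨N - 1, by omega⟩] := by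
  ext i
  fin_cases i <;> simp [blockC, add_mulVec, single_mulVec]

theorem det_schurComplement (hN : 1 ≤ N) (hy : y ≠ 1) :
    (blockB N ρ y - vecMulVec (blockC N y *ᵥ solutionE N ρ y) (Pi.single 0 1)).det =
      ρ * pN N y := by
  have h1y : 1 - y ≠ 0 := sub_ne_zero.mpr hy.symm
  rw [blockC_mulVec N y hN]
  have : blockB N ρ y - vecMulVec ![0, 0, N * y / (1 - y) * solutionE N ρ y (Fin.last N),
      y / (1 - y) * solutionE N ρ y ⟨N - 1, by omega⟩] (Pi.single 0 1) =
      !![-ρ, -y / (1 - y), 1, 0;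
        0, -1, 0, 0;
        ρ * y ^ N * (1 + N * (1 - y)) - N * y / (1 - y) * solutionE N ρ y (Fin.last N), 0, -1,
          y / (1 - y);
        ρ * y ^ (N - 1) * (1 - y) - y / (1 - y) * solutionE N ρ y ⟨N - 1, by omega⟩, 0, 0,
          -1] := by
    ext i j
    rw [Matrix.sub_apply, vecMulVec_apply]
    fin_cases i <;> fin_cases j <;> simp [blockB]
  rw [this, det_fin_four_sparse]
  obtain ⟨M, rfl⟩ : ∃ M, N = M + 1 := ⟨N - 1, by omega⟩
  simp only [solutionE, pN, Fin.val_last, Nat.cast_add, Nat.cast_one, add_tsub_cancel_right]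
  field_simp
  linear_combination (-(ρ * y * (1 - y))) * natCast_mul_pow_pred_mul y M

theorem det_Amat (hN : 1 ≤ N) (hy : y ≠ 1) :
    (Amat N ρ y).det = (-1 / (1 - y)) ^ (N + 1) * (ρ * pN N y) := by
  have hdetE : (blockE N y).det ≠ 0 := by
    rw [det_blockE]
    exact pow_ne_zero _ (div_ne_zero (by norm_num) (sub_ne_zero.mpr hy.symm))
  let : Invertible (blockE N y) := invertibleOfIsUnitDet _ hdetE.isUnit
  have hsol : ⅟(blockE N y) *ᵥ columnD N ρ y = solutionE N ρ y := by
    rw [← blockE_mulVec_solutionE N ρ y hy, mulVec_mulVec, invOf_mul_self, one_mulVec]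
  rw [← det_submatrix_equiv_self (splitIndex N), submatrix_Amat_eq_fromBlocks N ρ y hN,
    det_fromBlocks₂₂, det_blockE, Matrix.mul_assoc, mul_vecMulVec, hsol, mul_vecMulVec,
    det_schurComplement N ρ y hN hy]

end Silicosis

/-- For `y* < y < 1` (i.e. `p_N(y) < 0`), `A` has a positive real eigenvalue. -/
theorem stmt17 (N : ℕ) (hN : 1 ≤ N) (ρ y : ℝ) (hρ : 0 < ρ) (hy : y ∈ Set.Ioo (0 : ℝ) 1)
    (hp : pN N y < 0) :
    ∃ lam : ℝ, 0 < lam ∧ (Amat N ρ y - lam • 1).det = 0 := by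
  apply Matrix.exists_pos_det_sub_smul_one_eq_zero
  have h1y : 0 < 1 - y := sub_pos.mpr hy.2
  have hsign : (-1 : ℝ) ^ (N + 5) * (-1 / (1 - y)) ^ (N + 1) = (1 / (1 - y)) ^ (N + 1) := by
    rw [neg_div, neg_pow (1 / (1 - y)), ← mul_assoc, ← pow_add,
      Even.neg_one_pow ⟨N + 3, by ring⟩, one_mul]
  rw [Fintype.card_fin, Silicosis.det_Amat N ρ y hN hy.2.ne, ← mul_assoc, hsign]
  exact mul_neg_of_pos_of_neg (by positivity) (mul_neg_of_pos_of_neg hρ hp)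
end
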